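/- arXiv:1312.2681 — 4 statements merged into one kernel-verified Lean document; each statement's English description precedes it below -/
import Mathlib

section
/- Let G, K, p, q be positive integers with p ≤ G − 1 and q ≤ (G − p)·K, let C be a real number, and let d : Fin G × Fin K → ℝ be a nonnegative family (d(i,j) is indexed by a 'cell' i and a 'user' j). Suppose that for every subset B ⊆ Fin G with |B| = p and every subset U of {(g,h) ∈ Fin G × Fin K : g ∉ B} with |U| = q, one has ∑_{i∈B} ∑_{j∈Fin K} d(i,j) + ∑_{(g,h)∈U} d(g,h) ≤ C. Then ∑_{i∈Fin G} ∑_{j∈Fin K} d(i,j) ≤ (G·K / (K·p + q)) · C. -/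
/-!
Averaging. If every `k`-subset of an `n`-set has `f`-sum at most `c`, summing over all of them
counts each element `(n-1).choose (k-1)` times, so `k * ∑ f ≤ n * c`. For a fixed group `B` of
`p` cells, averaging the hypothesis over the `q`-subsets of the `(G - p) K` users outside `B`
gives `((G - p) K - q) · d(B) ≤ (G - p) K C - q S`, where `S` is the total sum; averaging this
over the groups `B` replaces `d(B)` by `p S / G`, which yields `(K p + q) S ≤ G K C`.
-/

open Finset

namespace Finset

variable {α : Type*} [DecidableEq α]

theorem card_filter_mem_powersetCard {s : Finset α} {i : α} (hi : i ∈ s) {k : ℕ} (hk : 0 < k) :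
    #((s.powersetCard k).filter (i ∈ ·)) = (#s - 1).choose (k - 1) := by
  simpa only [singleton_subset_iff, card_singleton] using
    card_filter_powersetCard_subset {i} s k (singleton_subset_iff.mpr hi) hk

theorem sum_powersetCard_sum {M : Type*} [AddCommMonoid M] (s : Finset α) {k : ℕ} (hk : 0 < k)
    (f : α → M) :
    ∑ B ∈ s.powersetCard k, ∑ i ∈ B, f i = (#s - 1).choose (k - 1) • ∑ i ∈ s, f i := by
  rw [sum_comm' (t' := s) (s' := fun i => (s.powersetCard k).filter (i ∈ ·)), smul_sum]
  · refine sum_congr rfl fun i hi => ?_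
    rw [sum_const, card_filter_mem_powersetCard hi hk]
  · intro B i
    simp only [mem_filter, mem_powersetCard]
    exact ⟨fun ⟨hB, hiB⟩ => ⟨⟨hB, hiB⟩, hB.1 hiB⟩, fun ⟨h, _⟩ => h⟩

theorem mul_sum_le_card_mul_of_forall_powersetCard {R : Type*} [CommRing R] [LinearOrder R]
    [IsStrictOrderedRing R] {s : Finset α} {k : ℕ} (hk : k ≤ #s) {f : α → R} {c : R}
    (h : ∀ B ∈ s.powersetCard k, ∑ i ∈ B, f i ≤ c) :
    k * ∑ i ∈ s, f i ≤ #s * c := by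
  obtain _ | j := k
  · have hc : 0 ≤ c := by simpa using h ∅ (by simp)
    simpa using mul_nonneg (Nat.cast_nonneg (α := R) s.card) hc
  obtain ⟨n, hn⟩ : ∃ n, #s = n + 1 := ⟨#s - 1, by omega⟩
  have hsum := sum_le_sum h
  rw [sum_powersetCard_sum s j.succ_pos, sum_const, card_powersetCard, hn] at hsum
  simp only [nsmul_eq_mul, Nat.succ_sub_one] at hsum
  have hchoose : ((n + 1 : ℕ) : R) * n.choose j = (n + 1).choose (j + 1) * (j + 1 : ℕ) := by
    exact_mod_cast Nat.add_one_mul_choose_eq n j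
  have hpos : (0 : R) < (n + 1).choose (j + 1) := by
    exact_mod_cast Nat.choose_pos (hn ▸ hk)
  rw [hn]
  refine le_of_mul_le_mul_left ?_ hpos
  calc ((n + 1).choose (j + 1) : R) * ((j + 1 : ℕ) * ∑ i ∈ s, f i)
      = (n + 1 : ℕ) * (n.choose j * ∑ i ∈ s, f i) := by
        rw [← mul_assoc, ← mul_assoc, hchoose, mul_comm ((n + 1).choose (j + 1) : R)]
    _ ≤ (n + 1 : ℕ) * ((n + 1).choose (j + 1) * c) :=
        mul_le_mul_of_nonneg_left hsum (by positivity)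
    _ = _ := by ring

end Finset

theorem sum_group_le_of_forall_outOfGroup_le {G K p q : ℕ} (hpG : p ≤ G) (hqK : q ≤ (G - p) * K)
    {C : ℝ} {d : Fin G × Fin K → ℝ} {B : Finset (Fin G)} (hB : #B = p)
    (hbound : ∀ U : Finset (Fin G × Fin K), (∀ x ∈ U, x.1 ∉ B) → #U = q →
      (∑ i ∈ B, ∑ j, d (i, j)) + (∑ x ∈ U, d x) ≤ C) :
    (((G : ℝ) - p) * K - q) * ∑ i ∈ B, ∑ j, d (i, j)
      ≤ ((G : ℝ) - p) * K * C - q * ∑ i, ∑ j, d (i, j) := by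
  have hcard : #(Bᶜ ×ˢ univ : Finset (Fin G × Fin K)) = (G - p) * K := by
    simp [card_compl, hB]
  have hout : ∑ x ∈ Bᶜ ×ˢ univ, d x = ∑ i, ∑ j, d (i, j) - ∑ i ∈ B, ∑ j, d (i, j) := by
    rw [sum_product, eq_sub_iff_add_eq, sum_compl_add_sum]
  have hU := mul_sum_le_card_mul_of_forall_powersetCard (hcard ▸ hqK) (f := d)
    (c := C - ∑ i ∈ B, ∑ j, d (i, j)) fun U hU => by
      rw [mem_powersetCard] at hU
      rw [le_sub_iff_add_le']
      exact hbound U (fun x hx => by simpa using (mem_product.1 (hU.1 hx)).1) hU.2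
  rw [hout, hcard, Nat.cast_mul, Nat.cast_sub hpG] at hU
  linear_combination hU

theorem stmt_0_general (G K p q : ℕ) (hG : 0 < G) (hq : 0 < q)
    (hpG : p ≤ G - 1) (hqK : q ≤ (G - p) * K)
    (C : ℝ) (d : Fin G × Fin K → ℝ)
    (hbound : ∀ B : Finset (Fin G), B.card = p →
      ∀ U : Finset (Fin G × Fin K), (∀ x ∈ U, x.1 ∉ B) → U.card = q →
        (∑ i ∈ B, ∑ j : Fin K, d (i, j)) + (∑ x ∈ U, d x) ≤ C) :
    (∑ i : Fin G, ∑ j : Fin K, d (i, j)) ≤ ((G : ℝ) * K / ((K : ℝ) * p + q)) * C := by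
  have hpG' : p ≤ G := by omega
  have hGp : (0 : ℝ) < G - p := by
    rw [sub_pos]; exact_mod_cast (by omega : p < G)
  have hcells := mul_sum_le_card_mul_of_forall_powersetCard (s := univ) (k := p)
      (f := fun i => (((G : ℝ) - p) * K - q) * ∑ j, d (i, j)) (by simpa using hpG') fun B hB => by
    rw [mem_powersetCard] at hB
    rw [← mul_sum]
    exact sum_group_le_of_forall_outOfGroup_le hpG' hqK hB.2 (hbound B hB.2)
  rw [← mul_sum, card_univ, Fintype.card_fin] at hcells
  -- `p ((G - p) K - q) + G q = (G - p) (K p + q)`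
  have key : ((K : ℝ) * p + q) * ∑ i, ∑ j, d (i, j) ≤ G * K * C :=
    le_of_mul_le_mul_left (by linear_combination hcells) hGp
  rw [div_mul_eq_mul_div, le_div_iff₀ (by positivity)]
  linarith

theorem stmt_0 (G K p q : ℕ) (hG : 0 < G) (hK : 0 < K) (hp : 0 < p) (hq : 0 < q)
    (hpG : p ≤ G - 1) (hqK : q ≤ (G - p) * K)
    (C : ℝ) (d : Fin G × Fin K → ℝ) (hd : ∀ x, 0 ≤ d x)
    (hbound : ∀ B : Finset (Fin G), B.card = p →
      ∀ U : Finset (Fin G × Fin K), (∀ x ∈ U, x.1 ∉ B) → U.card = q →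
        (∑ i ∈ B, ∑ j : Fin K, d (i, j)) + (∑ x ∈ U, d x) ≤ C) :
    (∑ i : Fin G, ∑ j : Fin K, d (i, j)) ≤ ((G : ℝ) * K / ((K : ℝ) * p + q)) * C :=
  stmt_0_general G K p q hG hq hpG hqK C d hbound
end

section
/- Let K be a positive integer and let M, N, ω be positive real numbers. Define f_{(ω,K)}(M,N) = max( N·ω/(K·ω + 1), M/(K·ω + 1) ). Then f_{(ω,K)}(M,N) ≥ M·N/(K·M + N), and equality holds if and only if ω = M/N. -/
theorem stmt_2 (K : ℕ) (hK : 0 < K) (M N ω : ℝ) (hM : 0 < M) (hN : 0 < N) (hω : 0 < ω) :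
    M * N / (K * M + N) ≤ max (N * ω / (K * ω + 1)) (M / (K * ω + 1)) ∧
    (max (N * ω / (K * ω + 1)) (M / (K * ω + 1)) = M * N / (K * M + N) ↔ ω = M / N) := by
  have hD : (0:ℝ) < K * ω + 1 := by positivity
  have hE : (0:ℝ) < K * M + N := by positivity
  have hKr : (0:ℝ) < (K:ℝ) := Nat.cast_pos.mpr hK
  have main : ∀ x : ℝ, N * ω ≤ M → x = M / (K * ω + 1) → M * N / (K * M + N) ≤ x := by
    intro x h hx
    rw [hx, div_le_div_iff₀ hE hD]
    nlinarith [mul_le_mul_of_nonneg_left h (mul_nonneg hKr.le hM.le)]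
  have main2 : ∀ x : ℝ, M ≤ N * ω → x = N * ω / (K * ω + 1) → M * N / (K * M + N) ≤ x := by
    intro x h hx
    rw [hx, div_le_div_iff₀ hE hD]
    nlinarith
  constructor
  · rcases le_total (N * ω) M with h | h
    · exact le_trans (main _ h rfl) (le_max_right _ _)
    · exact le_trans (main2 _ h rfl) (le_max_left _ _)
  · constructor
    · intro heq
      by_contra hne
      rcases lt_or_gt_of_ne hne with h | h
      · -- ω < M/N, so N*ω < M, then M/(Kω+1) > target
        have h' : N * ω < M := by
          have := (lt_div_iff₀ hN).mp h
          linarith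
        have hstrict : M * N / (K * M + N) < M / (K * ω + 1) := by
          rw [div_lt_div_iff₀ hE hD]
          nlinarith [mul_lt_mul_of_pos_left h' (mul_pos hKr hM)]
        have := le_max_right (N * ω / (K * ω + 1)) (M / (K * ω + 1))
        linarith [heq ▸ lt_of_lt_of_le hstrict this]
      · have h' : M < N * ω := by
          have := (div_lt_iff₀ hN).mp h
          linarith
        have hstrict : M * N / (K * M + N) < N * ω / (K * ω + 1) := by
          rw [div_lt_div_iff₀ hE hD]
          nlinarith
        have := le_max_left (N * ω / (K * ω + 1)) (M / (K * ω + 1))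
        linarith [heq ▸ lt_of_lt_of_le hstrict this]
    · intro h
      subst h
      have hNe : N ≠ 0 := ne_of_gt hN
      have h1 : N * (M / N) / (K * (M / N) + 1) = M * N / (K * M + N) := by
        rw [div_eq_div_iff (by positivity) hE.ne']
        field_simp
      have h2 : M / (K * (M / N) + 1) = M * N / (K * M + N) := by
        rw [div_eq_div_iff (by positivity) hE.ne']
        field_simp
      rw [h1, h2, max_self]
end

section
/- Let G ≥ 2 and K ≥ 1 be integers with K·(G−1)² > 4, and let γ_l = (K·(G−1) − √(K²·(G−1)² − 4K))/(2K) and γ_r = (K·(G−1) + √(K²·(G−1)² − 4K))/(2K). Then for all positive reals M, N: M·N/(K·M + N) > (M + N)/(G·K + 1) if and only if γ_l < M/N < γ_r. -/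
set_option maxHeartbeats 1000000 in
theorem stmt_5 (G K : ℕ) (hG : 2 ≤ G) (hK : 1 ≤ K)
    (h4 : (4 : ℝ) < (K : ℝ) * ((G : ℝ) - 1) ^ 2)
    (M N : ℝ) (hM : 0 < M) (hN : 0 < N) :
    M * N / (K * M + N) > (M + N) / (G * K + 1) ↔
      ((K : ℝ) * ((G : ℝ) - 1)
          - Real.sqrt ((K : ℝ) ^ 2 * ((G : ℝ) - 1) ^ 2 - 4 * K)) / (2 * K) < M / N ∧
      M / N < ((K : ℝ) * ((G : ℝ) - 1)
          + Real.sqrt ((K : ℝ) ^ 2 * ((G : ℝ) - 1) ^ 2 - 4 * K)) / (2 * K) := by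
  have hKpos : (0:ℝ) < (K:ℝ) := by exact_mod_cast Nat.lt_of_lt_of_le Nat.zero_lt_one hK
  have hGR : (2:ℝ) ≤ (G:ℝ) := by exact_mod_cast hG
  set g : ℝ := (G:ℝ) - 1 with hgdef
  have hg : (1:ℝ) ≤ g := by simp [hgdef]; linarith
  set D : ℝ := (K:ℝ)^2 * g^2 - 4 * K with hDdef
  have hDpos : 0 < D := by
    have : (K:ℝ) * ((K:ℝ) * g^2) > (K:ℝ) * 4 := by
      apply mul_lt_mul_of_pos_left _ hKpos; linarith
    simp only [hDdef]; nlinarith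
  set s : ℝ := Real.sqrt D with hsdef
  have hs0 : 0 ≤ s := Real.sqrt_nonneg _
  have hs2 : s^2 = D := Real.sq_sqrt hDpos.le
  have hden1 : (0:ℝ) < (K:ℝ) * M + N := by positivity
  have hden2 : (0:ℝ) < (G:ℝ) * (K:ℝ) + 1 := by positivity
  have h2K : (0:ℝ) < 2 * (K:ℝ) := by linarith
  rw [gt_iff_lt, div_lt_div_iff₀ hden2 hden1, div_lt_div_iff₀ h2K hN,
    div_lt_div_iff₀ hN h2K]
  have hGK : (G:ℝ) * (K:ℝ) + 1 = (K:ℝ) * g + (K:ℝ) + 1 := by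
    simp only [hgdef]; ring
  rw [hGK]
  constructor
  · intro h
    have key : (K:ℝ) * M^2 - (K:ℝ) * g * M * N + N^2 < 0 := by nlinarith [h]
    have hkey : (K:ℝ) * ((K:ℝ) * M^2 - (K:ℝ) * g * M * N + N^2) < 0 :=
      mul_neg_of_pos_of_neg hKpos key
    have hsq : (2 * (K:ℝ) * M - (K:ℝ) * g * N)^2 < (s * N)^2 := by
      have hsn : (s*N)^2 = ((K:ℝ)^2 * g^2 - 4 * K) * N^2 := by
        rw [mul_pow, hs2, hDdef]
      rw [hsn]; nlinarith [hkey]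
    have hsN : 0 < s * N := by
      have : 0 < s := Real.sqrt_pos.mpr hDpos
      positivity
    have e1 : -(s * N) < 2 * (K:ℝ) * M - (K:ℝ) * g * N := by
      nlinarith [hsq, hsN, sq_nonneg (2 * (K:ℝ) * M - (K:ℝ) * g * N + s * N)]
    have e2 : 2 * (K:ℝ) * M - (K:ℝ) * g * N < s * N := by
      nlinarith [hsq, hsN, sq_nonneg (2 * (K:ℝ) * M - (K:ℝ) * g * N - s * N)]
    constructor <;> nlinarith [e1, e2]
  · rintro ⟨h1, h2⟩
    have key : (K:ℝ) * M^2 - (K:ℝ) * g * M * N + N^2 < 0 := by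
      have e1 : ((K:ℝ) * g - s) * N < M * (2 * K) := by linarith
      have e2 : M * (2 * K) < ((K:ℝ) * g + s) * N := by linarith
      nlinarith [hs2, mul_pos hN hN, mul_pos (sub_pos.mpr e1) (sub_pos.mpr e2)]
    nlinarith [key]
end

section
/- Let G ≥ 2 and K ≥ 1 be integers, and let γ > 0 be a real number satisfying K·γ² − K·(G−1)·γ + 1 = 0. Then γ < G, and the three quantities γ/(K·γ + 1), (γ + 1)/(G·K + 1), and 1/(K·(G − γ)) are all equal. -/
theorem stmt_6 (G K : ℕ) (hG : 2 ≤ G) (hK : 1 ≤ K) (γ : ℝ) (hγ : 0 < γ)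
    (hroot : (K : ℝ) * γ ^ 2 - (K : ℝ) * ((G : ℝ) - 1) * γ + 1 = 0) :
    γ < G ∧
    γ / (K * γ + 1) = (γ + 1) / (G * K + 1) ∧
    (γ + 1) / (G * K + 1) = 1 / (K * ((G : ℝ) - γ)) := by
  have hK1 : (1 : ℝ) ≤ K := by exact_mod_cast hK
  have hG2 : (2 : ℝ) ≤ G := by exact_mod_cast hG
  have hKpos : (0 : ℝ) < K := by linarith
  have hlt : γ < (G : ℝ) - 1 := by
    by_contra h
    push_neg at h
    nlinarith [mul_pos hKpos hγ]
  have hγG : γ < G := by linarith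
  have d1 : (0 : ℝ) < K * γ + 1 := by positivity
  have d2 : (0 : ℝ) < (G : ℝ) * K + 1 := by positivity
  have d3 : (0 : ℝ) < (K : ℝ) * ((G : ℝ) - γ) := by
    apply mul_pos hKpos; linarith
  refine ⟨hγG, ?_, ?_⟩
  · rw [div_eq_div_iff (ne_of_gt d1) (ne_of_gt d2)]; nlinarith
  · rw [div_eq_div_iff (ne_of_gt d2) (ne_of_gt d3)]; nlinarith
end
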